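/- arXiv:2410.15170 — 2 statements merged into one kernel-verified Lean document; each statement's English description precedes it below -/
import Mathlib

section
/- For window $h_0^{\Omega/N}(t) := \overline{e^{\pi i t^T(\Omega/N)t}}$, the STFT of the Dirac comb $\epsilon_n$ admits the theta function expression $\mathbf{V}_{h_0^{\Omega/N}}\epsilon_n(x,\xi) = e^{\pi i x^T(\Omega/N)x}\,e^{\pi i n^T(\Omega/N)n}\,e^{2\pi \bar{z}^T n}\,\vartheta_N(i(\bar{z} + i\Omega n/N), \Omega)$, where $\bar{z} := -i(\Omega/N)x - i\xi$. -/
open scoped BigOperators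

/-- The complex quadratic form `vᵀ Ω v`. -/
noncomputable def quadFormC {d : ℕ} (Ω : Matrix (Fin d) (Fin d) ℂ) (v : Fin d → ℂ) : ℂ :=
  ∑ i, ∑ j, v i * Ω i j * v j

/-- The Riemann theta function of order `N`. -/
noncomputable def riemannTheta {d : ℕ} (N : ℕ) (Ω : Matrix (Fin d) (Fin d) ℂ)
    (z : Fin d → ℂ) : ℂ :=
  ∑' k : Fin d → ℤ,
    Complex.exp ((Real.pi : ℂ) * Complex.I * N * quadFormC Ω (fun i => (k i : ℂ))
      + 2 * (Real.pi : ℂ) * Complex.I * N * ∑ i, (k i : ℂ) * z i)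

/-
Write `n + Nk - x = (n - x) + Nk` and expand the quadratic form. Since `Ω` is symmetric, the
`k`-independent part of each summand of the comb's STFT is the prefactor
`e^{πi xᵀ(Ω/N)x} e^{πi nᵀ(Ω/N)n} e^{2π z̄ᵀn}`, and the `k`-dependent part is the summand of
`ϑ_N(i(z̄ + iΩn/N), Ω)` at `-k`.
-/

open Matrix Complex
open scoped Real

lemma Matrix.IsSymm.dotProduct_mulVec_comm {ι R : Type*} [Fintype ι] [CommSemiring R]
    {A : Matrix ι ι R} (hA : A.IsSymm) (u v : ι → R) : u ⬝ᵥ A *ᵥ v = v ⬝ᵥ A *ᵥ u := by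
  rw [dotProduct_mulVec, ← mulVec_transpose, hA.eq, dotProduct_comm]

variable {d : ℕ} {Ω : Matrix (Fin d) (Fin d) ℂ}

lemma quadFormC_eq_dotProduct_mulVec (Ω : Matrix (Fin d) (Fin d) ℂ) (v : Fin d → ℂ) :
    quadFormC Ω v = v ⬝ᵥ Ω *ᵥ v := by
  simp only [quadFormC, dotProduct, mulVec, Finset.mul_sum, mul_assoc]

/-- The point `z̄ = -i(Ω/N)x - iξ` of the paper. -/
noncomputable def stftPoint (N : ℂ) (Ω : Matrix (Fin d) (Fin d) ℂ) (x ξ : Fin d → ℂ) :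
    Fin d → ℂ :=
  fun i => -I * (Ω *ᵥ x) i / N - I * ξ i

lemma stftPoint_eq (N : ℂ) (Ω : Matrix (Fin d) (Fin d) ℂ) (x ξ : Fin d → ℂ) :
    stftPoint N Ω x ξ = -(I / N) • Ω *ᵥ x - I • ξ := by
  ext i; simp only [stftPoint, Pi.sub_apply, Pi.smul_apply, smul_eq_mul]; ring

lemma stft_summand_eq {N : ℂ} (hN : N ≠ 0) (hΩ : Ω.IsSymm) (a x ξ k : Fin d → ℂ) :
    exp (π * I * quadFormC Ω (a + N • k - x) / N) * exp (-2 * π * I * (ξ ⬝ᵥ (a + N • k))) =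
      exp (π * I * quadFormC Ω x / N) * exp (π * I * quadFormC Ω a / N) *
        exp (2 * π * (stftPoint N Ω x ξ ⬝ᵥ a)) *
        exp (π * I * N * quadFormC Ω (-k)
          + 2 * π * I * N * ((-k) ⬝ᵥ fun i => I * (stftPoint N Ω x ξ i + I * (Ω *ᵥ a) i / N))) := by
  have hθ : (fun i => I * (stftPoint N Ω x ξ i + I * (Ω *ᵥ a) i / N)) =
      I • (stftPoint N Ω x ξ + (I / N) • Ω *ᵥ a) := by
    ext i; simp only [Pi.smul_apply, Pi.add_apply, smul_eq_mul]; ring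
  simp only [← exp_add, hθ]
  congr 1
  simp only [quadFormC_eq_dotProduct_mulVec, stftPoint_eq, mulVec_add, mulVec_sub, mulVec_smul,
    mulVec_neg, dotProduct_add, add_dotProduct, sub_dotProduct, dotProduct_sub, smul_dotProduct,
    dotProduct_smul, neg_dotProduct, dotProduct_neg, smul_eq_mul]
  rw [hΩ.dotProduct_mulVec_comm x a, hΩ.dotProduct_mulVec_comm a k, hΩ.dotProduct_mulVec_comm x k,
    dotProduct_comm (Ω *ᵥ x) a, dotProduct_comm k ξ]
  field_simp
  -- what is left is a multiple of `I * I + 1`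
  linear_combination 2 * N * (k ⬝ᵥ Ω *ᵥ a - k ⬝ᵥ Ω *ᵥ x - N * ξ ⬝ᵥ k) * I_mul_I

theorem stft_gaussianComb_theta_general {d : ℕ} (N : ℕ) (hN : 0 < N)
    (Ω : Matrix (Fin d) (Fin d) ℂ) (hΩsym : Ω.IsSymm)
    (n : Fin d → Fin N) (x ξ : Fin d → ℝ) :
    (∑' k : Fin d → ℤ,
        Complex.exp ((Real.pi : ℂ) * Complex.I *
            quadFormC Ω (fun i => ((n i : ℕ) : ℂ) + N * k i - (x i : ℂ)) / N) *
          Complex.exp (-2 * (Real.pi : ℂ) * Complex.I *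
            ∑ i, (ξ i : ℂ) * (((n i : ℕ) : ℂ) + N * k i))) =
      Complex.exp ((Real.pi : ℂ) * Complex.I *
          quadFormC Ω (fun i => (x i : ℂ)) / N) *
        Complex.exp ((Real.pi : ℂ) * Complex.I *
          quadFormC Ω (fun i => ((n i : ℕ) : ℂ)) / N) *
        Complex.exp (2 * (Real.pi : ℂ) *
          ∑ i, (-Complex.I * (∑ j, Ω i j * (x j : ℂ)) / N - Complex.I * (ξ i : ℂ)) *
            ((n i : ℕ) : ℂ)) *
        riemannTheta N Ω (fun i =>
          Complex.I * ((-Complex.I * (∑ j, Ω i j * (x j : ℂ)) / N - Complex.I * (ξ i : ℂ))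
            + Complex.I * (∑ j, Ω i j * ((n j : ℕ) : ℂ)) / N)) := by
  -- over a field `tsum_mul_left` needs no summability
  conv_rhs => rw [riemannTheta, ← (Equiv.neg (Fin d → ℤ)).tsum_eq, ← tsum_mul_left]
  refine tsum_congr fun k => ?_
  simp only [Equiv.neg_apply, Pi.neg_apply, Int.cast_neg]
  exact stft_summand_eq (N := N) (by exact_mod_cast hN.ne') hΩsym (fun i => ((n i : ℕ) : ℂ))
    (fun i => (x i : ℂ)) (fun i => (ξ i : ℂ)) (fun i => (k i : ℂ))

/-- for the window `h₀^{Ω/N}(t) = conj(e^{πi tᵀ(Ω/N)t})`, the STFT of the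
Dirac comb `ε_n` is given by the theta-function expression
`V_{h₀^{Ω/N}} ε_n(x,ξ) = e^{πi xᵀ(Ω/N)x} e^{πi nᵀ(Ω/N)n} e^{2π z̄ᵀn} ϑ_N(i(z̄ + iΩn/N), Ω)`
with `z̄ = -i(Ω/N)x - iξ`.  Here the left-hand side is the series
`∑_{k∈ℤᵈ} conj(h₀^{Ω/N}(n+Nk-x)) e^{-2πi ξᵀ(n+Nk)}`. -/
theorem stft_gaussianComb_theta {d : ℕ} (N : ℕ) (hN : 0 < N)
    (Ω : Matrix (Fin d) (Fin d) ℂ) (hΩsym : Ω.IsSymm)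
    (hΩpos : (Ω.map Complex.im).PosDef)
    (n : Fin d → Fin N) (x ξ : Fin d → ℝ) :
    (∑' k : Fin d → ℤ,
        Complex.exp ((Real.pi : ℂ) * Complex.I *
            quadFormC Ω (fun i => ((n i : ℕ) : ℂ) + N * k i - (x i : ℂ)) / N) *
          Complex.exp (-2 * (Real.pi : ℂ) * Complex.I *
            ∑ i, (ξ i : ℂ) * (((n i : ℕ) : ℂ) + N * k i))) =
      Complex.exp ((Real.pi : ℂ) * Complex.I *
          quadFormC Ω (fun i => (x i : ℂ)) / N) *
        Complex.exp ((Real.pi : ℂ) * Complex.I *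
          quadFormC Ω (fun i => ((n i : ℕ) : ℂ)) / N) *
        Complex.exp (2 * (Real.pi : ℂ) *
          ∑ i, (-Complex.I * (∑ j, Ω i j * (x j : ℂ)) / N - Complex.I * (ξ i : ℂ)) *
            ((n i : ℕ) : ℂ)) *
        riemannTheta N Ω (fun i =>
          Complex.I * ((-Complex.I * (∑ j, Ω i j * (x j : ℂ)) / N - Complex.I * (ξ i : ℂ))
            + Complex.I * (∑ j, Ω i j * ((n j : ℕ) : ℂ)) / N)) :=
  stft_gaussianComb_theta_general N hN Ω hΩsym n x ξ
end

section
/- The sampling-periodization commutation underlying Theorem 3.1: for Schwartz $f, g$ on $\mathbb{R}^d$ and $k, l \in I_N$, the STFT of the double periodization evaluated at the sample points satisfies $\mathbf{V}_g(\mathbf{\Sigma}_N f)(k, l/N) = \sum_{m\in I_N}\mathbf{f}_N[m]\,\overline{\mathbf{g}_N[m-k]}\,e^{-2\pi i l^T m/N}$, where $\mathbf{f}_N[m] := \sum_{j\in\mathbb{Z}^d} f(m - jN)$ and similarly for $\mathbf{g}_N$ (indices taken mod $N$); i.e. it equals the discrete Gabor transform of the periodized samples. -/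
open scoped BigOperators

/-- The periodized samples `f_N[m] = ∑_{j∈ℤᵈ} f(m - jN)`, indexed mod `N`. -/
noncomputable def perSamples {d N : ℕ} (f : (Fin d → ℝ) → ℂ) (m : Fin d → ZMod N) : ℂ :=
  ∑' j : Fin d → ℤ, f (fun i => ((m i).val : ℝ) - j i * N)

/-
The sum over `j ∈ ℤᵈ` only reindexes: writing `nᵢ - kᵢ = (n - k)ᵢ + N cᵢ` with `cᵢ ∈ ℤ`, the
substitution `j ↦ -(j + c)` turns the sampled, translated window `∑ⱼ g(n + Nj - k)` into the
periodized sample `g_N[n - k]`; and the modulation `e^{-2πi lᵀ(n + Nj)/N}` does not depend on `j`.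
-/

theorem ZMod.exists_val_sub_val_eq {N : ℕ} [NeZero N] (a b : ZMod N) :
    ∃ c : ℤ, (a.val : ℤ) - b.val = (a - b).val + N * c := by
  have hdvd : (N : ℤ) ∣ (a.val : ℤ) - b.val - (a - b).val := by
    rw [← ZMod.intCast_zmod_eq_zero_iff_dvd]
    push_cast
    simp [ZMod.natCast_val, ZMod.cast_id]
  obtain ⟨c, hc⟩ := hdvd
  exact ⟨c, by linarith⟩

theorem perSamples_sub {d N : ℕ} [NeZero N] (g : (Fin d → ℝ) → ℂ) (n k : Fin d → ZMod N) :
    perSamples g (n - k) =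
      ∑' j : Fin d → ℤ, g (fun i => ((n i).val : ℝ) + N * j i - ((k i).val : ℝ)) := by
  choose c hc using fun i => ZMod.exists_val_sub_val_eq (n i) (k i)
  rw [perSamples, ← (Equiv.neg _ |>.trans (Equiv.subRight c)).tsum_eq]
  refine tsum_congr fun j => congrArg g (funext fun i => ?_)
  have hci : ((n i).val : ℝ) - (k i).val = (n i - k i).val + N * c i := by exact_mod_cast hc i
  simp only [Equiv.trans_apply, Equiv.neg_apply, Equiv.subRight_apply, Pi.sub_apply,
    Pi.neg_apply, Int.cast_sub, Int.cast_neg]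
  linarith

theorem cexp_neg_two_pi_I_sum_div_mul_add_intMul {d N : ℕ} [NeZero N] (a x : Fin d → ℕ)
    (j : Fin d → ℤ) :
    Complex.exp (-2 * (Real.pi : ℂ) * Complex.I *
        ∑ i, (((a i : ℝ) / N : ℝ) : ℂ) * ((x i : ℂ) + N * j i)) =
      Complex.exp (-2 * (Real.pi : ℂ) * Complex.I *
        ((∑ i, (a i : ℝ) * (x i : ℝ) : ℝ) : ℂ) / N) := by
  have hN : (N : ℂ) ≠ 0 := Nat.cast_ne_zero.mpr (NeZero.ne N)
  have hsplit : ∑ i, (((a i : ℝ) / N : ℝ) : ℂ) * ((x i : ℂ) + N * j i) =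
      ((∑ i, (a i : ℝ) * (x i : ℝ) : ℝ) : ℂ) / N + ((∑ i, (a i : ℤ) * j i : ℤ) : ℂ) := by
    push_cast
    rw [Finset.sum_div, ← Finset.sum_add_distrib]
    refine Finset.sum_congr rfl fun i _ => ?_
    field_simp
  have hint : -2 * (Real.pi : ℂ) * Complex.I * ((∑ i, (a i : ℤ) * j i : ℤ) : ℂ) =
      ((-∑ i, (a i : ℤ) * j i : ℤ) : ℂ) * (2 * Real.pi * Complex.I) := by
    push_cast
    ring
  rw [hsplit, mul_add, Complex.exp_add, hint, Complex.exp_int_mul_two_pi_mul_I, mul_one,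
    mul_div_assoc]

/-- for Schwartz `f, g`, the STFT of the double periodization
`Σ_N f = ∑_{n∈I_N} f_N[n] ε_n` evaluated at the sample points `(k, l/N)` equals the
discrete Gabor transform of the periodized samples:
`V_g(Σ_N f)(k, l/N) = ∑_{m∈I_N} f_N[m] conj(g_N[m-k]) e^{-2πi lᵀm/N}`. -/
theorem stft_doublePer_eq_dgt {d N : ℕ} [NeZero N]
    (f g : SchwartzMap (Fin d → ℝ) ℂ) (k l : Fin d → ZMod N) :
    (∑ n : Fin d → ZMod N, perSamples (⇑f) n *
        ∑' j : Fin d → ℤ,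
          (starRingEnd ℂ) (g (fun i => ((n i).val : ℝ) + N * j i - ((k i).val : ℝ))) *
            Complex.exp (-2 * (Real.pi : ℂ) * Complex.I *
              ∑ i, ((((l i).val : ℝ) / N : ℝ) : ℂ) * ((((n i).val : ℕ) : ℂ) + N * j i))) =
      ∑ m : Fin d → ZMod N, perSamples (⇑f) m *
        (starRingEnd ℂ) (perSamples (⇑g) (m - k)) *
        Complex.exp (-2 * (Real.pi : ℂ) * Complex.I *
          (∑ i, ((l i).val : ℝ) * ((m i).val : ℝ)) / N) := by
  refine Finset.sum_congr rfl fun n _ => ?_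
  simp_rw [cexp_neg_two_pi_I_sum_div_mul_add_intMul (fun i => (l i).val) (fun i => (n i).val)]
  rw [tsum_mul_right, ← Complex.conj_tsum, ← perSamples_sub]
  exact (mul_assoc _ _ _).symm
end
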